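/- Let k be a commutative ring, M a free abelian group with a W-action (W finite) and suppose there exist elements χ₁, ..., χ_n ∈ k[M]^W such that for every tuple (m₁,...,m_n) of nonnegative integers, the product χ₁^{m₁}···χ_n^{m_n} equals Sym(e^λ) + Σ_{μ<λ} c_μ Sym(e^μ) with λ = Σ m_i λ_i, where the λ_i freely generate the monoid of dominant weights and < is a partial order in which every dominant weight dominates only finitely many dominant weights. Then k[M]^W is the polynomial ring k[χ₁, ..., χ_n]; i.e., the χ_i are algebraically independent and generate k[M]^W as a k-algebra. -/

import Mathlib

open scoped BigOperators

/-!
In the orbit-sum basis `Sym(e^d)` of `k[M]^W`, the monomial `χ^m = ∏ χᵢ^{mᵢ}` is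
`Sym(e^{Σ mᵢ λᵢ})` plus terms at strictly lower dominant weights, and `m ↦ Σ mᵢ λᵢ` is a
bijection from `ℕⁿ` onto the dominant weights. So the images of the monomials form a
unitriangular family with respect to a basis indexed by a poset with finite lower sets:
comparing coefficients at a maximal weight shows they are linearly independent, and
well-founded induction on the weight shows they span. Hence `aeval χ` sends the monomial
basis of `k[X₁, …, Xₙ]` to a basis of `k[M]^W`.
-/

open Submodule

/-- The orbit sum `Sym(e^λ) = Σ_{μ ∈ W·λ} e^μ` in the group algebra `k[M]`. -/
noncomputable def orbitSum (k : Type*) [CommRing k] {M : Type*} [AddCommGroup M]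
    (W : Type*) [Group W] [DistribMulAction W M] (lam : M) :
    AddMonoidAlgebra k M :=
  ∑ᶠ mu ∈ MulAction.orbit W lam, AddMonoidAlgebra.single mu (1 : k)

/-- The `W`-invariants `k[M]^W` of the group algebra. -/
def groupAlgebraInvariants (k : Type*) [CommRing k] (M : Type*) [AddCommGroup M]
    (W : Type*) [Group W] [DistribMulAction W M] :
    Submodule k (AddMonoidAlgebra k M) where
  carrier := {f | ∀ w : W, AddMonoidAlgebra.mapDomain (fun m => w • m) f = f}
  add_mem' := by
    intro f g hf hg w
    rw [AddMonoidAlgebra.mapDomain_add, hf w, hg w]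
  zero_mem' := by
    intro w
    rw [AddMonoidAlgebra.mapDomain_zero]
  smul_mem' := by
    intro c f hf w
    rw [AddMonoidAlgebra.mapDomain_vadd, hf w]

theorem wellFounded_lt_of_finite_Iic {D : Type*} [PartialOrder D]
    (hfin : ∀ d : D, (Set.Iic d).Finite) : WellFounded (· < · : D → D → Prop) :=
  Subrelation.wf (fun hlt => Set.ncard_lt_ncard (Set.Iic_ssubset_Iic.mpr hlt) (hfin _))
    (measure fun d => (Set.Iic d).ncard).wf

namespace Module.Basis

variable {R V D ι : Type*} [Ring R] [AddCommGroup V] [Module R V] [PartialOrder D]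
  (b : Basis D R V)

def HasLeadingTerm (d : D) (x : V) : Prop :=
  b.repr x d = 1 ∧ ∀ d', b.repr x d' ≠ 0 → d' ≤ d

variable {b}

theorem hasLeadingTerm_add_sum {d : D} {s : Finset D} (hs : ∀ j ∈ s, j < d) (c : D → R) :
    b.HasLeadingTerm d (b d + ∑ j ∈ s, c j • b j) := by
  classical
  have hrepr : ∀ d', b.repr (b d + ∑ j ∈ s, c j • b j) d' =
      (if d = d' then 1 else 0) + ∑ j ∈ s, if j = d' then c j else 0 := by
    intro d'
    simp [Finsupp.single_apply]
  refine ⟨?_, fun d' hd' => ?_⟩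
  · rw [hrepr, if_pos rfl, Finset.sum_eq_zero fun j hj => if_neg (hs j hj).ne, add_zero]
  · rcases eq_or_ne d d' with rfl | hne
    · exact le_rfl
    · rw [hrepr, if_neg hne, zero_add] at hd'
      obtain ⟨j, hj, hjd⟩ := Finset.exists_ne_zero_of_sum_ne_zero hd'
      rw [← (ite_ne_right_iff.mp hjd).1]
      exact (hs j hj).le

theorem linearIndependent_of_hasLeadingTerm {v : ι → V} {f : ι → D}
    (hv : ∀ i, b.HasLeadingTerm (f i) (v i)) (hf : Function.Injective f) :
    LinearIndependent R v := by
  classical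
  rw [linearIndependent_iff']
  intro s g hsum
  by_contra! hne
  obtain ⟨i₀, hi₀s, hgi₀⟩ := hne
  set s' := s.filter (g · ≠ 0)
  -- At a maximal `f i` among the nonzero coefficients only the term `i` contributes.
  obtain ⟨i, hi⟩ := Finset.exists_maximalFor f s' ⟨i₀, Finset.mem_filter.mpr ⟨hi₀s, hgi₀⟩⟩
  have hi' := Finset.mem_filter.mp hi.prop
  have hcoeff : ∑ j ∈ s, g j * b.repr (v j) (f i) = 0 := by
    simpa using congrArg (fun x => b.repr x (f i)) hsum
  rw [Finset.sum_eq_single_of_mem i hi'.1, (hv i).1, mul_one] at hcoeff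
  · exact hi'.2 hcoeff
  · intro j hjs hji
    by_contra hj
    have hle : f i ≤ f j := (hv j).2 _ (right_ne_zero_of_mul hj)
    have hjs' : j ∈ s' := Finset.mem_filter.mpr ⟨hjs, left_ne_zero_of_mul hj⟩
    exact hji (hf (le_antisymm (hi.2 hjs' hle) hle))

theorem span_eq_top_of_hasLeadingTerm {v : ι → V} {f : ι → D}
    (hv : ∀ i, b.HasLeadingTerm (f i) (v i)) (hf : Function.Surjective f)
    (hfin : ∀ d : D, (Set.Iic d).Finite) : span R (Set.range v) = ⊤ := by
  have hb : ∀ d, b d ∈ span R (Set.range v) := by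
    intro d
    induction d using (wellFounded_lt_of_finite_Iic hfin).induction with | _ d ih
    obtain ⟨i, rfl⟩ := hf d
    have hlower : v i - b (f i) ∈ span R (Set.range v) := by
      refine span_le.mpr ?_ (b.mem_span_repr_support _)
      rintro _ ⟨d', hd', rfl⟩
      have hd' : b.repr (v i) d' - Finsupp.single (f i) 1 d' ≠ 0 := by simpa using hd'
      obtain rfl | hne := eq_or_ne d' (f i)
      · simp [(hv i).1] at hd'
      · rw [Finsupp.single_eq_of_ne hne, sub_zero] at hd'
        exact ih d' (lt_of_le_of_ne ((hv i).2 d' hd') hne)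
    simpa using sub_mem (subset_span (Set.mem_range_self i)) hlower
  rw [eq_top_iff, ← b.span_eq, span_le]
  rintro _ ⟨d, rfl⟩
  exact hb d

end Module.Basis

theorem LinearMap.injective_and_range_eq_of_map_basis {R P E ι : Type*} [Ring R]
    [AddCommGroup P] [Module R P] [AddCommGroup E] [Module R E] (f : P →ₗ[R] E)
    (c : Module.Basis ι R P) (V : Submodule R E) (z : ι → V) (hz : ∀ i, f (c i) = z i)
    (hli : LinearIndependent R z) (hsp : span R (Set.range z) = ⊤) :
    Function.Injective f ∧ LinearMap.range f = V := by
  have hfc : f ∘ c = V.subtype ∘ z := funext hz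
  refine ⟨LinearMap.injective_of_linearIndependent c.span_eq
    (hfc ▸ hli.map' V.subtype V.ker_subtype), ?_⟩
  rw [LinearMap.range_eq_map, ← c.span_eq, map_span, ← Set.range_comp, hfc, Set.range_comp,
    ← map_span, hsp, map_subtype_top]

theorem exists_hasLeadingTerm_orbitSum_add {k M W : Type*} [CommRing k] [AddCommGroup M]
    [Group W] [DistribMulAction W M] [PartialOrder M] {D : Set M}
    (b : Module.Basis D k (groupAlgebraInvariants k M W))
    (hb : ∀ d : D, (b d : AddMonoidAlgebra k M) = orbitSum k W (d : M))
    (d : D) (c : M → k) (hc : ∀ μ, c μ ≠ 0 → μ ∈ D ∧ μ < d) (hcfin : {μ | c μ ≠ 0}.Finite) :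
    ∃ x : groupAlgebraInvariants k M W,
      (x : AddMonoidAlgebra k M) =
        orbitSum k W (d : M) + ∑ᶠ μ ∈ {μ | c μ ≠ 0}, c μ • orbitSum k W μ ∧
      b.HasLeadingTerm d x := by
  classical
  set s : Finset D := hcfin.toFinset.subtype (· ∈ D)
  refine ⟨b d + ∑ j ∈ s, c j • b j, ?_, Module.Basis.hasLeadingTerm_add_sum (fun j hj => ?_) _⟩
  · have hs : ∀ μ ∈ hcfin.toFinset, μ ∈ D := fun μ hμ => (hc μ (by simpa using hμ)).1
    simp only [coe_add, coe_sum, coe_smul, hb, finsum_mem_eq_finite_toFinset_sum _ hcfin, s,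
      Finset.sum_subtype_of_mem (fun μ => c μ • orbitSum k W μ) hs]
  · exact (hc j (by simpa [s] using hj)).2

theorem invariants_polynomial_ring_on_fundamental_characters_general
    (k : Type*) [CommRing k] (M : Type*) [AddCommGroup M]
    (W : Type*) [Group W] [DistribMulAction W M]
    [PartialOrder M]
    (n : ℕ) (lam : Fin n → M) (D : Set M)
    (hfree : ∀ d ∈ D, ∃! m : Fin n → ℕ, d = ∑ i, m i • lam i)
    (hsum : ∀ m : Fin n → ℕ, (∑ i, m i • lam i) ∈ D)
    (hfin : ∀ d ∈ D, {d' ∈ D | d' ≤ d}.Finite)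
    (b : Module.Basis D k (groupAlgebraInvariants k M W))
    (hb : ∀ d : D, (b d : AddMonoidAlgebra k M) = orbitSum k W (d : M))
    (chi : Fin n → groupAlgebraInvariants k M W)
    (hchi : ∀ m : Fin n → ℕ, ∃ c : M → k,
      (∀ μ, c μ ≠ 0 → μ ∈ D ∧ μ < ∑ i, m i • lam i) ∧ {μ | c μ ≠ 0}.Finite ∧
      (∏ i, (chi i : AddMonoidAlgebra k M) ^ m i) =
        orbitSum k W (∑ i, m i • lam i) + ∑ᶠ μ ∈ {μ | c μ ≠ 0}, c μ • orbitSum k W μ) :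
    Function.Injective (MvPolynomial.aeval (fun i => (chi i : AddMonoidAlgebra k M)) :
        MvPolynomial (Fin n) k →ₐ[k] AddMonoidAlgebra k M) ∧
      Set.range (MvPolynomial.aeval (fun i => (chi i : AddMonoidAlgebra k M)) :
          MvPolynomial (Fin n) k →ₐ[k] AddMonoidAlgebra k M) =
        (groupAlgebraInvariants k M W : Set (AddMonoidAlgebra k M)) := by
  let wt : (Fin n →₀ ℕ) → D := fun m => ⟨∑ i, m i • lam i, hsum m⟩
  have hwt_inj : Function.Injective wt := fun m m' h =>
    DFunLike.coe_injective ((hfree _ (hsum m)).unique rfl (congrArg Subtype.val h))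
  have hwt_surj : Function.Surjective wt := by
    intro d
    obtain ⟨m, hm, -⟩ := hfree d d.2
    exact ⟨Finsupp.equivFunOnFinite.symm m, Subtype.ext (by simp [wt, hm])⟩
  have hlead : ∀ m, ∃ x : groupAlgebraInvariants k M W,
      (x : AddMonoidAlgebra k M) = ∏ i, (chi i : AddMonoidAlgebra k M) ^ m i ∧
      b.HasLeadingTerm (wt m) x := by
    intro m
    obtain ⟨c, hc, hcfin, hprod⟩ := hchi m
    rw [hprod]
    exact exists_hasLeadingTerm_orbitSum_add b hb (wt m) c hc hcfin
  choose z hz hzlead using hlead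
  have hIic : ∀ d : D, (Set.Iic d).Finite := fun d =>
    ((hfin d d.2).preimage Subtype.val_injective.injOn).subset fun d' hd' => ⟨d'.2, hd'⟩
  obtain ⟨hinj, hrange⟩ := LinearMap.injective_and_range_eq_of_map_basis
    (MvPolynomial.aeval fun i => (chi i : AddMonoidAlgebra k M)).toLinearMap
    (MvPolynomial.basisMonomials _ k) _ z
    (fun m => by
      simp only [AlgHom.toLinearMap_apply, MvPolynomial.coe_basisMonomials,
        MvPolynomial.aeval_monomial, map_one, one_mul, hz,
        Finsupp.prod_fintype _ _ fun _ => pow_zero _])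
    (Module.Basis.linearIndependent_of_hasLeadingTerm hzlead hwt_inj)
    (Module.Basis.span_eq_top_of_hasLeadingTerm hzlead hwt_surj hIic)
  exact ⟨hinj, congrArg SetLike.coe hrange⟩

/-- Let `W` be a finite group acting on a free abelian group `M`, `k` a
commutative ring, `D ⊆ M` the set of dominant weights, freely generated as a monoid by
`λ₁, ..., λ_n`, and `<` a partial order on `M` in which every dominant weight dominates
only finitely many dominant weights.  Suppose `k[M]^W` has `k`-basis the orbit sums
`Sym(e^d)`, `d ∈ D`, and `χ₁, ..., χ_n ∈ k[M]^W` satisfy, for every `(m₁, ..., m_n) ∈ ℕⁿ`,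
`χ₁^{m₁} ⋯ χ_n^{m_n} = Sym(e^λ) + Σ_{μ ∈ D, μ < λ} c_μ Sym(e^μ)` with `λ = Σ m_i λ_i`.
Then `k[M]^W = k[χ₁, ..., χ_n]` is a polynomial ring: the evaluation map from
`MvPolynomial (Fin n) k` sending `X i ↦ χ_i` is injective with image exactly `k[M]^W`. -/
theorem invariants_polynomial_ring_on_fundamental_characters
    (k : Type*) [CommRing k] (M : Type*) [AddCommGroup M] [Module.Free ℤ M]
    (W : Type*) [Group W] [Finite W] [DistribMulAction W M]
    [PartialOrder M]
    (n : ℕ) (lam : Fin n → M) (D : Set M)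
    (hfree : ∀ d ∈ D, ∃! m : Fin n → ℕ, d = ∑ i, m i • lam i)
    (hsum : ∀ m : Fin n → ℕ, (∑ i, m i • lam i) ∈ D)
    (hfin : ∀ d ∈ D, {d' ∈ D | d' ≤ d}.Finite)
    (b : Module.Basis D k (groupAlgebraInvariants k M W))
    (hb : ∀ d : D, (b d : AddMonoidAlgebra k M) = orbitSum k W (d : M))
    (chi : Fin n → groupAlgebraInvariants k M W)
    (hchi : ∀ m : Fin n → ℕ, ∃ c : M → k,
      (∀ μ, c μ ≠ 0 → μ ∈ D ∧ μ < ∑ i, m i • lam i) ∧ {μ | c μ ≠ 0}.Finite ∧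
      (∏ i, (chi i : AddMonoidAlgebra k M) ^ m i) =
        orbitSum k W (∑ i, m i • lam i) + ∑ᶠ μ ∈ {μ | c μ ≠ 0}, c μ • orbitSum k W μ) :
    Function.Injective (MvPolynomial.aeval (fun i => (chi i : AddMonoidAlgebra k M)) :
        MvPolynomial (Fin n) k →ₐ[k] AddMonoidAlgebra k M) ∧
      Set.range (MvPolynomial.aeval (fun i => (chi i : AddMonoidAlgebra k M)) :
          MvPolynomial (Fin n) k →ₐ[k] AddMonoidAlgebra k M) =
        (groupAlgebraInvariants k M W : Set (AddMonoidAlgebra k M)) :=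
  invariants_polynomial_ring_on_fundamental_characters_general k M W n lam D hfree hsum hfin b hb
    chi hchi
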